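/- arXiv:1701.09142 — 2 statements merged into one kernel-verified Lean document; each statement's English description precedes it below -/
import Mathlib

section
/- A function 𝓑: 2^Ω → {0,1} is a belief valuation if and only if there exists a coherent betting function R such that 𝓑(A)=1 ⟺ Buy_R(1_A)=1 for every A ⊆ Ω. -/
open scoped Classical

variable {Ω : Type*}

/-- A betting function: for each bet `X` there is a threshold `α₀` such that the
agent rejects `X + α` for `α < α₀` and accepts it for `α ≥ α₀`. -/
def IsBettingFunction (R : (Ω → ℝ) → Bool) : Prop :=
  ∀ X : Ω → ℝ, ∃ α₀ : ℝ,
    (∀ α : ℝ, α < α₀ → R (fun ω => X ω + α) = false) ∧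
    (∀ α : ℝ, α₀ ≤ α → R (fun ω => X ω + α) = true)

/-- The buy function: maximum price the agent pays for `X`. -/
noncomputable def Buy (R : (Ω → ℝ) → Bool) (X : Ω → ℝ) : ℝ :=
  sSup {α : ℝ | R (fun ω => X ω - α) = true}

/-- The sell function: minimum price at which the agent sells `X`. -/
noncomputable def Sell (R : (Ω → ℝ) → Bool) (X : Ω → ℝ) : ℝ :=
  sInf {α : ℝ | R (fun ω => α - X ω) = true}

/-- Coherence of a betting function. -/
def Coherent (R : (Ω → ℝ) → Bool) : Prop :=
  (∀ X : Ω → ℝ, (∀ ω, 0 < X ω) → R X = true) ∧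
  (∀ (X : Ω → ℝ) (c : ℝ), 0 < c → R (fun ω => c * X ω) = R X) ∧
  (∀ X Y : Ω → ℝ, R X = true → R Y = true → R (fun ω => X ω + Y ω) = true)

/-- Indicator bet of a set. -/
noncomputable def ind (A : Set Ω) : Ω → ℝ := A.indicator fun _ => 1

/-- A belief valuation. -/
def BeliefValuation (B : Set Ω → Bool) : Prop :=
  (∀ A : Set Ω, B A = true → B Aᶜ = false) ∧
  (∀ A C : Set Ω, B A = true → A ⊆ C → B C = true) ∧
  (∀ A C : Set Ω, B A = true → B C = true → B (A ∩ C) = true) ∧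
  B Set.univ = true

/-- Guaranteed revenue of a bet under a belief valuation. -/
noncomputable def GB (B : Set Ω → Bool) (X : Ω → ℝ) : ℝ :=
  sSup ((fun A => sInf (X '' A)) '' {A | B A = true})

/-- P-consistency: compare guaranteed revenues of combined bets. -/
def PConsistent (R : (Ω → ℝ) → Bool) : Prop :=
  ∀ (N M : ℕ) (X : Fin N → Ω → ℝ) (Y : Fin M → Ω → ℝ),
    (∀ E : Set Ω, E.Nonempty →
      sInf ((fun ω => ∑ i, X i ω) '' E) ≤ sInf ((fun ω => ∑ j, Y j ω) '' E)) →
    ∑ i, Buy R (X i) ≤ ∑ j, Buy R (Y j)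

/-- B-consistency: compare sums of guaranteed revenues of individual bets. -/
def BConsistent (R : (Ω → ℝ) → Bool) : Prop :=
  ∀ (N M : ℕ) (X : Fin N → Ω → ℝ) (Y : Fin M → Ω → ℝ),
    (∀ E : Set Ω, E.Nonempty →
      ∑ i, sInf (X i '' E) ≤ ∑ j, sInf (Y j '' E)) →
    ∑ i, Buy R (X i) ≤ ∑ j, Buy R (Y j)

/-- A (finitely additive) probability distribution with values in `[0,1]`. -/
def IsProbDist (P : Set Ω → ℝ) : Prop :=
  (∀ A : Set Ω, 0 ≤ P A ∧ P A ≤ 1) ∧ P ∅ = 0 ∧ P Set.univ = 1 ∧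
  ∀ A C : Set Ω, P (A ∪ C) = P A + P C - P (A ∩ C)

/-- A basic belief assignment. -/
def IsBBA [Fintype Ω] (m : Finset Ω → ℝ) : Prop :=
  (∀ S : Finset Ω, 0 ≤ m S ∧ m S ≤ 1) ∧ m ∅ = 0 ∧ ∑ S : Finset Ω, m S = 1

/-- Choquet integral of `X` with respect to the bba `m`. -/
noncomputable def Choquet [Fintype Ω] (m : Finset Ω → ℝ) (X : Ω → ℝ) : ℝ :=
  ∑ S : Finset Ω, m S * sInf (X '' (S : Set Ω))

/-- The belief function induced by a bba. -/
noncomputable def BelOf [Fintype Ω] (m : Finset Ω → ℝ) (A : Set Ω) : ℝ :=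
  ∑ S ∈ Finset.univ.filter (fun S : Finset Ω => (S : Set Ω) ⊆ A), m S

/-- Complete monotonicity (condition (B2)). -/
def CompletelyMonotone (Bel : Set Ω → ℝ) : Prop :=
  ∀ (N : ℕ) (A : Fin N → Set Ω),
    ∑ I ∈ (Finset.univ : Finset (Finset (Fin N))).filter (fun I => I ≠ ∅),
      (-1 : ℝ) ^ (I.card + 1) * Bel (⋂ i ∈ I, A i) ≤ Bel (⋃ i, A i)

/-- Shafer belief function. -/
def IsBeliefFunction (Bel : Set Ω → ℝ) : Prop :=
  (∀ A : Set Ω, 0 ≤ Bel A ∧ Bel A ≤ 1) ∧ Bel ∅ = 0 ∧ Bel Set.univ = 1 ∧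
  CompletelyMonotone Bel


section AuxBV

/-- The betting function induced by a belief valuation. -/
noncomputable def Rof (B : Set Ω → Bool) (X : Ω → ℝ) : Bool :=
  if (∃ A : Set Ω, B A = true ∧ ∀ ω ∈ A, (0:ℝ) ≤ X ω) then true else false

theorem Rof_iff (B : Set Ω → Bool) (X : Ω → ℝ) :
    Rof B X = true ↔ ∃ A : Set Ω, B A = true ∧ ∀ ω ∈ A, (0:ℝ) ≤ X ω := by
  rw [Rof]; split <;> simp_all

theorem ind_apply (A : Set Ω) (ω : Ω) :
    ind A ω = if ω ∈ A then (1:ℝ) else 0 := by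
  simp [ind, Set.indicator_apply]

theorem ind_nonneg (A : Set Ω) (ω : Ω) : (0:ℝ) ≤ ind A ω := by
  rw [ind_apply]; split <;> norm_num

theorem ind_le_one (A : Set Ω) (ω : Ω) : ind A ω ≤ 1 := by
  rw [ind_apply]; split <;> norm_num

section FinNE

variable [Fintype Ω] [Nonempty Ω]

theorem BV.nonempty {B : Set Ω → Bool} (hB : BeliefValuation B) {A : Set Ω}
    (h : B A = true) : A.Nonempty := by
  rcases Set.eq_empty_or_nonempty A with rfl | hne
  · have h1 := hB.1 _ h
    rw [Set.compl_empty] at h1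
    rw [hB.2.2.2] at h1; exact absurd h1 (by simp)
  · exact hne

theorem GBset_finite (B : Set Ω → Bool) (X : Ω → ℝ) :
    ((fun A => sInf (X '' A)) '' {A | B A = true}).Finite :=
  Set.Finite.image _ (Set.toFinite _)

theorem GBset_nonempty {B : Set Ω → Bool} (hB : BeliefValuation B) (X : Ω → ℝ) :
    ((fun A => sInf (X '' A)) '' {A | B A = true}).Nonempty :=
  ⟨_, ⟨Set.univ, hB.2.2.2, rfl⟩⟩

theorem Rof_add_iff {B : Set Ω → Bool} (hB : BeliefValuation B) (X : Ω → ℝ) (α : ℝ) :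
    Rof B (fun ω => X ω + α) = true ↔ -α ≤ GB B X := by
  rw [Rof_iff]
  constructor
  · rintro ⟨A, hA, h⟩
    have hne : (X '' A).Nonempty := (BV.nonempty hB hA).image _
    have h1 : -α ≤ sInf (X '' A) := by
      apply le_csInf hne
      rintro b ⟨ω, hω, rfl⟩
      have := h ω hω; linarith
    exact h1.trans (le_csSup (GBset_finite B X).bddAbove ⟨A, hA, rfl⟩)
  · intro h
    obtain ⟨A, hA, hval⟩ := (GBset_nonempty hB X).csSup_mem (GBset_finite B X)
    refine ⟨A, hA, fun ω hω => ?_⟩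
    have h1 : sInf (X '' A) ≤ X ω :=
      csInf_le ((Set.toFinite A).image X).bddBelow ⟨ω, hω, rfl⟩
    rw [GB] at h
    simp only at hval
    rw [hval] at h1
    linarith

theorem Rof_betting {B : Set Ω → Bool} (hB : BeliefValuation B) :
    IsBettingFunction (Rof B) := by
  intro X
  refine ⟨-(GB B X), fun α hα => ?_, fun α hα => ?_⟩
  · rw [Bool.eq_false_iff]
    intro h
    rw [Rof_add_iff hB] at h
    linarith
  · rw [Rof_add_iff hB]; linarith

theorem Rof_coherent {B : Set Ω → Bool} (hB : BeliefValuation B) :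
    Coherent (Rof B) := by
  refine ⟨fun X hX => ?_, fun X c hc => ?_, fun X Y hX hY => ?_⟩
  · rw [Rof_iff]
    exact ⟨Set.univ, hB.2.2.2, fun ω _ => (hX ω).le⟩
  · have : (Rof B fun ω => c * X ω) = true ↔ Rof B X = true := by
      rw [Rof_iff, Rof_iff]
      constructor <;> rintro ⟨A, hA, h⟩ <;> refine ⟨A, hA, fun ω hω => ?_⟩
      · nlinarith [h ω hω]
      · nlinarith [h ω hω]
    rcases Bool.eq_false_or_eq_true (Rof B X) with h | h <;> rw [h] at this ⊢
    · exact this.mpr rfl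
    · rw [Bool.eq_false_iff]; intro hc'; exact absurd (this.mp hc') (by simp)
  · rw [Rof_iff] at hX hY ⊢
    obtain ⟨A, hA, hXA⟩ := hX
    obtain ⟨C, hC, hYC⟩ := hY
    refine ⟨A ∩ C, hB.2.2.1 _ _ hA hC, fun ω hω => ?_⟩
    have := hXA ω hω.1; have := hYC ω hω.2; linarith

theorem Buy_Rof {B : Set Ω → Bool} (hB : BeliefValuation B) (X : Ω → ℝ) :
    Buy (Rof B) X = GB B X := by
  rw [Buy]
  have hs : {α : ℝ | Rof B (fun ω => X ω - α) = true} = Set.Iic (GB B X) := by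
    ext α
    have heq : (fun ω => X ω - α) = fun ω => X ω + (-α) := by funext ω; ring
    simp only [Set.mem_setOf_eq, heq, Rof_add_iff hB, neg_neg, Set.mem_Iic]
  rw [hs, csSup_Iic]

theorem GB_ind_eq_one_iff {B : Set Ω → Bool} (hB : BeliefValuation B) (A : Set Ω) :
    B A = true ↔ GB B (ind A) = 1 := by
  constructor
  · intro hA
    have hAne := BV.nonempty hB hA
    have h1 : sInf (ind A '' A) = 1 := by
      apply le_antisymm
      · obtain ⟨ω, hω⟩ := hAne
        have hω1 : ind A ω = 1 := by rw [ind_apply, if_pos hω]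
        calc sInf (ind A '' A) ≤ ind A ω :=
              csInf_le ((Set.toFinite A).image _).bddBelow ⟨ω, hω, rfl⟩
          _ = 1 := hω1
      · apply le_csInf (hAne.image _)
        rintro b ⟨ω, hω, rfl⟩
        rw [ind_apply, if_pos hω]
    apply le_antisymm
    · apply csSup_le (GBset_nonempty hB _)
      rintro b ⟨C, hC, rfl⟩
      obtain ⟨ω, hω⟩ := BV.nonempty hB hC
      calc sInf (ind A '' C) ≤ ind A ω :=
            csInf_le ((Set.toFinite C).image _).bddBelow ⟨ω, hω, rfl⟩
        _ ≤ 1 := ind_le_one A ω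
    · rw [← h1]
      exact le_csSup (GBset_finite B _).bddAbove ⟨A, hA, rfl⟩
  · intro h
    obtain ⟨C, hC, hval⟩ := (GBset_nonempty hB (ind A)).csSup_mem
      (GBset_finite B (ind A))
    simp only at hval
    rw [GB] at h
    rw [h] at hval
    have hsub : C ⊆ A := by
      intro ω hω
      by_contra hωA
      have h0 : ind A ω = 0 := by rw [ind_apply, if_neg hωA]
      have hle : sInf (ind A '' C) ≤ 0 := by
        calc sInf (ind A '' C) ≤ ind A ω :=
              csInf_le ((Set.toFinite C).image _).bddBelow ⟨ω, hω, rfl⟩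
          _ = 0 := h0
      rw [hval] at hle; linarith
    exact hB.2.1 _ _ hC hsub

variable {R : (Ω → ℝ) → Bool}

theorem Rclosed (hR : IsBettingFunction R) (Y : Ω → ℝ)
    (h : ∀ δ : ℝ, 0 < δ → R (fun ω => Y ω + δ) = true) : R Y = true := by
  obtain ⟨α₀, hlt, hge⟩ := hR Y
  have hα : α₀ ≤ 0 := by
    by_contra hpos
    push_neg at hpos
    have h1 := hlt (α₀ / 2) (by linarith)
    rw [h (α₀ / 2) (by linarith)] at h1
    exact absurd h1 (by simp)
  have := hge 0 hα
  simpa using this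

theorem Rmono (hR : IsBettingFunction R) (hC : Coherent R) {X Y : Ω → ℝ}
    (hXY : ∀ ω, X ω ≤ Y ω) (hX : R X = true) : R Y = true := by
  apply Rclosed hR
  intro δ hδ
  have h1 : R (fun ω => Y ω - X ω + δ) = true :=
    hC.1 _ (fun ω => by have := hXY ω; linarith)
  have h2 := hC.2.2 _ _ hX h1
  have heq : (fun ω => X ω + (Y ω - X ω + δ)) = fun ω => Y ω + δ := by funext ω; ring
  rwa [heq] at h2

theorem Rnegconst (hR : IsBettingFunction R) (hC : Coherent R) {c : ℝ} (hc : c < 0) :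
    R (fun _ => c) = false := by
  obtain ⟨α₀, hlt, _⟩ := hR (fun _ => (0:ℝ))
  rw [Bool.eq_false_iff]
  intro h
  set α := min α₀ 0 - 1 with hα
  have hαlt : α < α₀ := by have := min_le_left α₀ 0; simp only [hα]; linarith
  have hαneg : α < 0 := by have := min_le_right α₀ 0; simp only [hα]; linarith
  have hpos : 0 < α / c := div_pos_of_neg_of_neg hαneg hc
  have h2 := hC.2.1 (fun _ => c) _ hpos
  rw [h] at h2
  have h3 : (fun _ : Ω => α / c * c) = fun _ : Ω => (0:ℝ) + α := by
    funext ω; rw [div_mul_cancel₀ _ (ne_of_lt hc)]; ring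
  rw [h3] at h2
  rw [hlt α hαlt] at h2
  exact absurd h2 (by simp)

theorem Rnegpt (hR : IsBettingFunction R) (hC : Coherent R) {X : Ω → ℝ}
    (hX : ∀ ω, X ω < 0) : R X = false := by
  obtain ⟨ω₀, _, hc⟩ := Finset.exists_mem_eq_sup' (Finset.univ_nonempty (α := Ω)) X
  have hle : ∀ ω, X ω ≤ X ω₀ := fun ω => by
    rw [← hc]; exact Finset.le_sup' X (Finset.mem_univ ω)
  rw [Bool.eq_false_iff]
  intro h
  have h1 : R (fun _ => X ω₀) = true := Rmono hR hC hle h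
  rw [Rnegconst hR hC (hX ω₀)] at h1
  exact absurd h1 (by simp)

theorem Rbuy_set (hR : IsBettingFunction R) (X : Ω → ℝ) {α₀ : ℝ}
    (hlt : ∀ α : ℝ, α < α₀ → R (fun ω => X ω + α) = false)
    (hge : ∀ α : ℝ, α₀ ≤ α → R (fun ω => X ω + α) = true) :
    {α : ℝ | R (fun ω => X ω - α) = true} = Set.Iic (-α₀) := by
  ext α
  simp only [Set.mem_setOf_eq, Set.mem_Iic]
  have heq : (fun ω => X ω - α) = fun ω => X ω + (-α) := by funext ω; ring
  rw [heq]
  constructor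
  · intro h
    by_contra hgt
    push_neg at hgt
    rw [hlt (-α) (by linarith)] at h
    exact absurd h (by simp)
  · intro h
    exact hge (-α) (by linarith)

end FinNE

end AuxBV

theorem beliefValuation_iff_betting [Fintype Ω] [Nonempty Ω] (B : Set Ω → Bool) :
    BeliefValuation B ↔
      ∃ R : (Ω → ℝ) → Bool, IsBettingFunction R ∧ Coherent R ∧
        ∀ A : Set Ω, (B A = true ↔ Buy R (ind A) = 1) := by
  constructor
  · intro hB
    refine ⟨Rof B, Rof_betting hB, Rof_coherent hB, fun A => ?_⟩
    rw [Buy_Rof hB, GB_ind_eq_one_iff hB]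
  · rintro ⟨R, hR, hCo, hBuy⟩
    have hbuy_char : ∀ X : Ω → ℝ, ∃ α₀ : ℝ, Buy R X = -α₀ ∧
        (∀ α : ℝ, α < α₀ → R (fun ω => X ω + α) = false) ∧
        (∀ α : ℝ, α₀ ≤ α → R (fun ω => X ω + α) = true) := by
      intro X
      obtain ⟨α₀, hlt, hge⟩ := hR X
      exact ⟨α₀, by rw [Buy, Rbuy_set hR X hlt hge, csSup_Iic], hlt, hge⟩
    have hb1 : ∀ X : Ω → ℝ, Buy R X = 1 → R (fun ω => X ω - 1) = true := by
      intro X h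
      obtain ⟨α₀, hb, hlt, hge⟩ := hbuy_char X
      have hα : α₀ ≤ -1 := by rw [hb] at h; linarith
      have := hge (-1) hα
      have heq : (fun ω => X ω + (-1)) = fun ω => X ω - 1 := by funext ω; ring
      rwa [heq] at this
    have hb2 : ∀ X : Ω → ℝ, R (fun ω => X ω - 1) = true → (∀ ω, X ω ≤ 1) →
        Buy R X = 1 := by
      intro X h hle
      obtain ⟨α₀, hb, hlt, hge⟩ := hbuy_char X
      have h1 : α₀ ≤ -1 := by
        by_contra hgt
        push_neg at hgt
        have hf := hlt (-1) hgt
        rw [(show (fun ω => X ω + (-1)) = fun ω => X ω - 1 by funext ω; ring)] at hf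
        rw [h] at hf
        exact absurd hf (by simp)
      have h2 : -1 ≤ α₀ := by
        by_contra hlt2
        push_neg at hlt2
        set α := (α₀ + -1) / 2 with hαdef
        have hge' := hge α (by rw [hαdef]; linarith)
        have hneg : ∀ ω, X ω + α < 0 := fun ω => by
          have := hle ω; rw [hαdef]; linarith
        rw [Rnegpt hR hCo hneg] at hge'
        exact absurd hge' (by simp)
      rw [hb]; linarith
    have hall : ∀ A : Set Ω, B A = true → R (fun ω => ind A ω - 1) = true :=
      fun A hA => hb1 _ ((hBuy A).mp hA)
    have hmk : ∀ A : Set Ω, R (fun ω => ind A ω - 1) = true → B A = true :=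
      fun A h => (hBuy A).mpr (hb2 _ h (ind_le_one A))
    refine ⟨?_, ?_, ?_, ?_⟩
    · intro A hA
      by_contra hAc
      have hAc' : B Aᶜ = true := by
        rcases Bool.eq_false_or_eq_true (B Aᶜ) with h | h
        · exact h
        · exact absurd h hAc
      have h1 := hall A hA
      have h2 := hall Aᶜ hAc'
      have h3 := hCo.2.2 _ _ h1 h2
      have heq : (fun ω => (ind A ω - 1) + (ind Aᶜ ω - 1)) = fun _ : Ω => (-1 : ℝ) := by
        funext ω
        rw [ind_apply, ind_apply]
        by_cases hω : ω ∈ A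
        · rw [if_pos hω, if_neg (by simp [hω])]; ring
        · rw [if_neg hω, if_pos (by simp [hω])]; ring
      rw [heq] at h3
      rw [Rnegconst hR hCo (by norm_num : (-1:ℝ) < 0)] at h3
      exact absurd h3 (by simp)
    · intro A C hA hsub
      apply hmk
      refine Rmono hR hCo (X := fun ω => ind A ω - 1) (fun ω => ?_) (hall A hA)
      have : ind A ω ≤ ind C ω := by
        rw [ind_apply, ind_apply]
        by_cases hω : ω ∈ A
        · rw [if_pos hω, if_pos (hsub hω)]
        · rw [if_neg hω]; split <;> norm_num
      linarith
    · intro A C hA hC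
      apply hmk
      have h3 := hCo.2.2 _ _ (hall A hA) (hall C hC)
      refine Rmono hR hCo (fun ω => ?_) h3
      rw [ind_apply, ind_apply, ind_apply]
      by_cases hωA : ω ∈ A <;> by_cases hωC : ω ∈ C
      · rw [if_pos hωA, if_pos hωC, if_pos ⟨hωA, hωC⟩]; ring_nf; norm_num
      · rw [if_pos hωA, if_neg hωC, if_neg (by simp [hωC])]; norm_num
      · rw [if_neg hωA, if_pos hωC, if_neg (by simp [hωA])]; norm_num
      · rw [if_neg hωA, if_neg hωC, if_neg (by simp [hωA])]; norm_num
    · apply hmk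
      have heq : (fun ω => ind (Set.univ : Set Ω) ω - 1) = fun _ : Ω => (0:ℝ) := by
        funext ω; rw [ind_apply, if_pos (Set.mem_univ ω)]; ring
      rw [heq]
      apply Rclosed hR
      intro δ hδ
      apply hCo.1
      intro ω
      simpa using hδ
end

section
/- A coherent betting function R is B-consistent if and only if there exists a basic belief assignment m such that Buy_R(X) = Σ_{S⊆Ω, S≠∅} m(S)·min_{ω∈S} X(ω) for every bet X. -/
open scoped Classical

variable {Ω : Type*}

/-!
Put `Bel T := Buy R (ind T)` and let `m` be its Möbius transform, so that `Bel` is the sum of `m`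
over subsets. The minimum of `ind T` over `E` is `[E ⊆ T]`, and `∑_{E ⊆ T ⊆ S} μ(T, S) = [E = S]`;
so B-consistency, applied to the positive and negative parts of the signed family
`T ↦ μ(T, S) • ind T`, gives `m S ≥ 0`. Both `Buy R` and the Choquet integral of `m` are additive on
monovarying bets, because two monovarying bets attain their minima over `E` at a common
point. Every bet on a finite space is such a sum of a constant and positive multiples of
indicators, and on these the two functionals agree by positive homogeneity. Conversely, the Choquet
integral is a nonnegative combination of minima, which makes it B-consistent.
-/

open Finset

lemma sInf_image_eq_of_forall_le {f : Ω → ℝ} {E : Set Ω} {ω : Ω} (hω : ω ∈ E)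
    (hle : ∀ ω' ∈ E, f ω ≤ f ω') : sInf (f '' E) = f ω :=
  IsLeast.csInf_eq ⟨Set.mem_image_of_mem f hω, Set.forall_mem_image.2 hle⟩

lemma sInf_image_smul {c : ℝ} (hc : 0 ≤ c) (X : Ω → ℝ) (E : Set Ω) :
    sInf ((c • X) '' E) = c * sInf (X '' E) := by
  rw [← smul_eq_mul, ← Real.sInf_smul_of_nonneg hc, ← Set.image_smul, Set.image_image]
  rfl

lemma sInf_image_ind {E : Set Ω} (hE : E.Nonempty) (A : Set Ω) :
    sInf (ind A '' E) = if E ⊆ A then 1 else 0 := by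
  split_ifs with hEA
  · rw [Set.image_congr (g := fun _ => 1) fun ω hω => by simp [ind, hEA hω], hE.image_const,
      csInf_singleton]
  · obtain ⟨ω, hω, hωA⟩ := Set.not_subset.1 hEA
    rw [sInf_image_eq_of_forall_le hω fun ω' _ => ?_] <;> simp [ind, hωA, Set.indicator_nonneg]

lemma Monovary.sInf_image_add {f g : Ω → ℝ} (h : Monovary f g) {E : Set Ω} (hfin : E.Finite)
    (hne : E.Nonempty) : sInf ((f + g) '' E) = sInf (f '' E) + sInf (g '' E) := by
  obtain ⟨ω, hω, hle⟩ : ∃ ω ∈ E, ∀ ω' ∈ E, f ω ≤ f ω' ∧ g ω ≤ g ω' := by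
    obtain ⟨ωf, hωf, hf⟩ := E.exists_min_image f hfin hne
    obtain ⟨ωg, hωg, hg⟩ := E.exists_min_image g hfin hne
    rcases lt_or_ge (g ωg) (g ωf) with hlt | hge
    · exact ⟨ωg, hωg, fun ω' hω' => ⟨(h hlt).trans (hf ω' hω'), hg ω' hω'⟩⟩
    · exact ⟨ωf, hωf, fun ω' hω' => ⟨hf ω' hω', hge.trans (hg ω' hω')⟩⟩
  rw [sInf_image_eq_of_forall_le hω fun ω' hω' => add_le_add (hle ω' hω').1 (hle ω' hω').2,
    sInf_image_eq_of_forall_le hω fun ω' hω' => (hle ω' hω').1,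
    sInf_image_eq_of_forall_le hω fun ω' hω' => (hle ω' hω').2, Pi.add_apply]

def ComonotoneAdditive (F : (Ω → ℝ) → ℝ) : Prop :=
  ∀ X Y : Ω → ℝ, Monovary X Y → F (X + Y) = F X + F Y

/-- Induction on the set of values: peel off the top level set,
`X = min X b + (M - b) • ind {M ≤ X}`, where `M` and `b` are the two largest values of `X`. -/
theorem ComonotoneAdditive.ext [Finite Ω] {F G : (Ω → ℝ) → ℝ} (hF : ComonotoneAdditive F)
    (hG : ComonotoneAdditive G) (hconst : ∀ c : ℝ, F (fun _ => c) = G (fun _ => c))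
    (hind : ∀ c : ℝ, 0 < c → ∀ A : Set Ω, F (c • ind A) = G (c • ind A)) : F = G := by
  funext X
  suffices ∀ V : Finset ℝ, ∀ X : Ω → ℝ, (∀ ω, X ω ∈ V) → F X = G X from
    this _ X fun ω => (Set.finite_range X).mem_toFinset.2 ⟨ω, rfl⟩
  intro V
  induction V using Finset.induction_on_max with
  | empty =>
    intro X hX
    rw [show X = fun _ => 0 from funext fun ω => absurd (hX ω) (Finset.notMem_empty _)]
    exact hconst 0
  | insert M V hlt ih =>
    intro X hX
    rcases V.eq_empty_or_nonempty with rfl | hV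
    · rw [show X = fun _ => M from funext fun ω => by simpa using hX ω]
      exact hconst M
    set b := V.max' hV
    have hb : b < M := hlt b (V.max'_mem hV)
    have hsplit : X = (fun ω => min (X ω) b) + (M - b) • ind {ω | M ≤ X ω} := by
      funext ω
      rcases Finset.mem_insert.1 (hX ω) with hM | hV'
      · simp [ind, hM, hb.le]
      · have hXb : X ω ≤ b := V.le_max' _ hV'
        simp [ind, hXb, (hXb.trans_lt hb)]
    have hmono : Monovary (fun ω => min (X ω) b) ((M - b) • ind {ω | M ≤ X ω}) := by
      intro i j hij
      simp only [Pi.smul_apply, smul_eq_mul, ind, Set.indicator_apply, Set.mem_ofPred_eq] at hij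
      split_ifs at hij with hi hj <;> try linarith
      exact min_le_min_right b (by linarith)
    have hlow : ∀ ω, min (X ω) b ∈ V := by
      intro ω
      rcases Finset.mem_insert.1 (hX ω) with hM | hV'
      · rw [hM, min_eq_right hb.le]; exact V.max'_mem hV
      · rwa [min_eq_left (V.le_max' _ hV')]
    rw [hsplit, hF _ _ hmono, hG _ _ hmono, ih _ hlow, hind _ (sub_pos.2 hb)]

section Buy

variable {R : (Ω → ℝ) → Bool}

lemma accept_sub_iff_le_buy (hR : IsBettingFunction R) (X : Ω → ℝ) (α : ℝ) :
    R (fun ω => X ω - α) = true ↔ α ≤ Buy R X := by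
  obtain ⟨α₀, hrej, hacc⟩ := hR X
  have hiff : ∀ α, R (fun ω => X ω - α) = true ↔ α ≤ -α₀ := fun α => by
    rw [le_neg]
    simp_rw [sub_eq_add_neg]
    exact ⟨fun h => not_lt.1 fun hlt => by simp [hrej _ hlt] at h, hacc _⟩
  have hbuy : Buy R X = -α₀ := by
    rw [Buy, show {α | R (fun ω => X ω - α) = true} = Set.Iic (-α₀) from Set.ext hiff, csSup_Iic]
  rw [hiff, hbuy]

lemma buy_zero (hR : IsBettingFunction R) (hC : Coherent R) : Buy R (fun _ => 0) = 0 := by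
  set B := Buy R fun _ => 0
  have hacc : ∀ c, R (fun _ => c) = true ↔ -c ≤ B := fun c => by
    simpa using accept_sub_iff_le_buy hR (fun _ => 0) (-c)
  apply le_antisymm
  · have h : R (fun _ => 2 * -B) = true :=
      (hC.2.1 (fun _ => -B) 2 two_pos).trans ((hacc _).2 (by simp))
    linarith [(hacc _).1 h]
  · by_contra hneg
    have := (hacc (-B / 2)).1 (hC.1 _ fun _ => by linarith)
    linarith

lemma buy_const (hR : IsBettingFunction R) (hC : Coherent R) (c : ℝ) : Buy R (fun _ => c) = c := by
  refine eq_of_forall_le_iff fun α => ?_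
  rw [← accept_sub_iff_le_buy hR, ← sub_nonpos, ← buy_zero hR hC, ← accept_sub_iff_le_buy hR]
  simp only [zero_sub, neg_sub]

lemma buy_smul (hR : IsBettingFunction R) (hC : Coherent R) (X : Ω → ℝ) {c : ℝ} (hc : 0 ≤ c) :
    Buy R (c • X) = c * Buy R X := by
  rcases hc.eq_or_lt with rfl | hc
  · rw [zero_smul, zero_mul]
    exact buy_zero hR hC
  refine eq_of_forall_le_iff fun α => ?_
  rw [← accept_sub_iff_le_buy hR, ← div_le_iff₀' hc, ← accept_sub_iff_le_buy hR,
    ← hC.2.1 (fun ω => X ω - α / c) c hc]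
  congr! 3 with ω
  rw [Pi.smul_apply, smul_eq_mul, mul_sub, mul_div_cancel₀ _ hc.ne']

end Buy

section Consistency

variable {R : (Ω → ℝ) → Bool}

lemma BConsistent.sum_buy_le (hB : BConsistent R) {ι κ : Type*} (s : Finset ι) (t : Finset κ)
    (X : ι → Ω → ℝ) (Y : κ → Ω → ℝ)
    (h : ∀ E : Set Ω, E.Nonempty → ∑ i ∈ s, sInf (X i '' E) ≤ ∑ j ∈ t, sInf (Y j '' E)) :
    ∑ i ∈ s, Buy R (X i) ≤ ∑ j ∈ t, Buy R (Y j) := by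
  have hs : ∀ f : (Ω → ℝ) → ℝ, ∑ k, f (X (s.equivFin.symm k)) = ∑ i ∈ s, f (X i) := fun f =>
    (s.equivFin.symm.sum_comp fun i : s => f (X i)).trans (s.sum_coe_sort fun i => f (X i))
  have ht : ∀ f : (Ω → ℝ) → ℝ, ∑ k, f (Y (t.equivFin.symm k)) = ∑ j ∈ t, f (Y j) := fun f =>
    (t.equivFin.symm.sum_comp fun j : t => f (Y j)).trans (t.sum_coe_sort fun j => f (Y j))
  rw [← hs, ← ht]
  exact hB _ _ _ _ fun E hE => by
    rw [hs fun Z => sInf (Z '' E), ht fun Z => sInf (Z '' E)]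
    exact h E hE

lemma BConsistent.sum_mul_buy_nonneg (hR : IsBettingFunction R) (hC : Coherent R)
    (hB : BConsistent R) {ι : Type*} (s : Finset ι) (w : ι → ℝ) (X : ι → Ω → ℝ)
    (h : ∀ E : Set Ω, E.Nonempty → 0 ≤ ∑ i ∈ s, w i * sInf (X i '' E)) :
    0 ≤ ∑ i ∈ s, w i * Buy R (X i) := by
  have hsplit : ∀ a : ι → ℝ,
      ∑ i ∈ s, w i * a i = ∑ i ∈ s, (w i)⁺ * a i - ∑ i ∈ s, (w i)⁻ * a i := fun a => by
    rw [← sum_sub_distrib]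
    exact sum_congr rfl fun i _ => by rw [← sub_mul, posPart_sub_negPart]
  have := hB.sum_buy_le s s (fun i => (w i)⁻ • X i) (fun i => (w i)⁺ • X i) fun E hE => by
    simp only [sInf_image_smul (negPart_nonneg _), sInf_image_smul (posPart_nonneg _)]
    linarith [hsplit fun i => sInf (X i '' E), h E hE]
  simp only [buy_smul hR hC _ (negPart_nonneg _), buy_smul hR hC _ (posPart_nonneg _)] at this
  linarith [hsplit fun i => Buy R (X i)]

lemma BConsistent.comonotoneAdditive_buy [Finite Ω] (hB : BConsistent R) :
    ComonotoneAdditive (Buy R) := by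
  intro X Y hXY
  have hmin : ∀ E : Set Ω, E.Nonempty → sInf ((X + Y) '' E) = sInf (X '' E) + sInf (Y '' E) :=
    fun E hE => hXY.sInf_image_add E.toFinite hE
  apply le_antisymm
  · simpa [Fin.sum_univ_two] using
      hB 1 2 ![X + Y] ![X, Y] fun E hE => by simpa [Fin.sum_univ_two] using (hmin E hE).le
  · simpa [Fin.sum_univ_two] using
      hB 2 1 ![X, Y] ![X + Y] fun E hE => by simpa [Fin.sum_univ_two] using (hmin E hE).ge

end Consistency

section Choquet

variable [Fintype Ω] (m : Finset Ω → ℝ)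

lemma comonotoneAdditive_choquet : ComonotoneAdditive (Choquet m) := by
  intro X Y hXY
  rw [Choquet, Choquet, Choquet, ← sum_add_distrib]
  refine sum_congr rfl fun S _ => ?_
  rcases S.eq_empty_or_nonempty with rfl | hS
  · simp
  · rw [hXY.sInf_image_add S.finite_toSet (coe_nonempty.2 hS), mul_add]

lemma choquet_smul {c : ℝ} (hc : 0 ≤ c) (X : Ω → ℝ) : Choquet m (c • X) = c * Choquet m X := by
  simp only [Choquet, sInf_image_smul hc, mul_sum, mul_left_comm]

variable {m}

lemma choquet_const (h0 : m ∅ = 0) (h1 : ∑ S, m S = 1) (c : ℝ) : Choquet m (fun _ => c) = c := by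
  have hterm : ∀ S, m S * sInf ((fun _ => c) '' (S : Set Ω)) = m S * c := fun S => by
    rcases S.eq_empty_or_nonempty with rfl | hS
    · simp [h0]
    · rw [(coe_nonempty.2 hS).image_const, csInf_singleton]
  rw [Choquet, sum_congr rfl fun S _ => hterm S, ← sum_mul, h1, one_mul]

lemma choquet_ind (h0 : m ∅ = 0) (A : Set Ω) : Choquet m (ind A) = ∑ S ∈ Iic A.toFinset, m S := by
  have hterm : ∀ S, m S * sInf (ind A '' (S : Set Ω)) = if S ∈ Iic A.toFinset then m S else 0 :=
    fun S => by
      rcases S.eq_empty_or_nonempty with rfl | hS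
      · simp [h0]
      · simp [sInf_image_ind (coe_nonempty.2 hS), Set.subset_toFinset]
  rw [Choquet, sum_congr rfl fun S _ => hterm S, sum_ite_mem, univ_inter]

lemma sum_choquet_le_sum_choquet (hm : ∀ S, 0 ≤ m S) {ι κ : Type*} [Fintype ι] [Fintype κ]
    (X : ι → Ω → ℝ) (Y : κ → Ω → ℝ)
    (h : ∀ E : Set Ω, E.Nonempty → ∑ i, sInf (X i '' E) ≤ ∑ j, sInf (Y j '' E)) :
    ∑ i, Choquet m (X i) ≤ ∑ j, Choquet m (Y j) := by
  simp only [Choquet]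
  rw [sum_comm, sum_comm (s := univ (α := κ))]
  refine sum_le_sum fun S _ => ?_
  rw [← mul_sum, ← mul_sum]
  rcases S.eq_empty_or_nonempty with rfl | hS
  · simp
  · exact mul_le_mul_of_nonneg_left (h _ (coe_nonempty.2 hS)) (hm S)

end Choquet

section Moebius

open IncidenceAlgebra

variable {α 𝕜 : Type*} [Ring 𝕜] [PartialOrder α] [OrderBot α] [LocallyFiniteOrder α]
  [DecidableEq α]

lemma sum_Iic_sum_Iic_mu_mul (g : α → 𝕜) (x : α) :
    ∑ y ∈ Iic x, ∑ z ∈ Iic y, mu 𝕜 z y * g z = g x := by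
  rw [sum_comm' (t' := Iic x) (s' := fun z => Icc z x) fun y z => by
    simp only [mem_Iic, mem_Icc]
    exact ⟨fun h => ⟨⟨h.2, h.1⟩, h.2.trans h.1⟩, fun h => ⟨h.1.2, h.1.1⟩⟩]
  simp [← sum_mul, sum_Icc_mu_right]

end Moebius

section Mass

open IncidenceAlgebra

noncomputable def buyMass (R : (Ω → ℝ) → Bool) (S : Finset Ω) : ℝ :=
  ∑ T ∈ Iic S, mu ℝ T S * Buy R (ind T)

variable {R : (Ω → ℝ) → Bool}

lemma sum_Iic_buyMass (F : Finset Ω) : ∑ S ∈ Iic F, buyMass R S = Buy R (ind F) :=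
  sum_Iic_sum_Iic_mu_mul _ F

variable [Fintype Ω]

lemma buyMass_nonneg (hR : IsBettingFunction R) (hC : Coherent R) (hB : BConsistent R)
    (S : Finset Ω) : 0 ≤ buyMass R S :=
  hB.sum_mul_buy_nonneg hR hC (Iic S) _ _ fun E hE => by
    have hIcc : (Iic S).filter (fun T : Finset Ω => E ⊆ T) = Icc E.toFinset S := by
      ext T
      simp [← Set.toFinset_subset, and_comm]
    simp only [sInf_image_ind hE, mul_boole, ← sum_filter]
    rw [hIcc, sum_Icc_mu_left]
    positivity

lemma isBBA_buyMass (hR : IsBettingFunction R) (hC : Coherent R) (hB : BConsistent R) :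
    IsBBA (buyMass R) := by
  have h0 : buyMass R ∅ = 0 := by
    simpa [Iic_eq_powerset, ind, buy_zero hR hC] using sum_Iic_buyMass (R := R) ∅
  have h1 : ∑ S, buyMass R S = 1 := by
    simpa [Iic_eq_powerset, ind, buy_const hR hC] using sum_Iic_buyMass (R := R) univ
  exact ⟨fun S => ⟨buyMass_nonneg hR hC hB S,
    h1 ▸ single_le_sum (fun T _ => buyMass_nonneg hR hC hB T) (mem_univ S)⟩, h0, h1⟩

lemma buy_eq_choquet_buyMass (hR : IsBettingFunction R) (hC : Coherent R)
    (hB : BConsistent R) : Buy R = Choquet (buyMass R) := by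
  obtain ⟨-, h0, h1⟩ := isBBA_buyMass hR hC hB
  refine hB.comonotoneAdditive_buy.ext (comonotoneAdditive_choquet _) (fun c => ?_)
    fun c hc A => ?_
  · rw [buy_const hR hC, choquet_const h0 h1]
  · rw [buy_smul hR hC _ hc.le, choquet_smul _ hc.le, choquet_ind h0, sum_Iic_buyMass,
      Set.coe_toFinset]

end Mass

theorem BConsistent_iff_choquet_general [Fintype Ω] (R : (Ω → ℝ) → Bool)
    (hR : IsBettingFunction R) (hC : Coherent R) :
    BConsistent R ↔
      ∃ m : Finset Ω → ℝ, IsBBA m ∧ ∀ X : Ω → ℝ, Buy R X = Choquet m X :=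
  ⟨fun hB => ⟨buyMass R, isBBA_buyMass hR hC hB, congrFun (buy_eq_choquet_buyMass hR hC hB)⟩,
    fun ⟨_, hm, hbuy⟩ _ _ X Y h => by
      simpa only [hbuy] using sum_choquet_le_sum_choquet (fun S => (hm.1 S).1) X Y h⟩

theorem BConsistent_iff_choquet [Fintype Ω] [Nonempty Ω] (R : (Ω → ℝ) → Bool)
    (hR : IsBettingFunction R) (hC : Coherent R) :
    BConsistent R ↔
      ∃ m : Finset Ω → ℝ, IsBBA m ∧ ∀ X : Ω → ℝ, Buy R X = Choquet m X :=
  BConsistent_iff_choquet_general R hR hC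
end
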